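/- arXiv:0712.1680 — 2 statements merged into one kernel-verified Lean document; each statement's English description precedes it below -/
import Mathlib

section
/- Let f, g, h : [a,b] → [0,∞) be continuous and p > 1. Then ((∫_a^b h f dx)^p + (∫_a^b h g dx)^p)^{1/p} ≤ ∫_a^b h (f^p + g^p)^{1/p} dx. -/
/-!
Both sides are ℓᵖ-norms on `ℝ²`: the left side is the norm of `∫ h • (f, g)` and the right side
is `∫ ‖h • (f, g)‖`, so the inequality is the triangle inequality `‖∫ F‖ ≤ ∫ ‖F‖` for the Bochner
integral in `WithLp p (ℝ × ℝ)`.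
-/

open MeasureTheory Set

theorem integral_toLp_pair {X E F : Type*} [MeasurableSpace X] {μ : Measure X}
    [NormedAddCommGroup E] [NormedSpace ℝ E] [CompleteSpace E]
    [NormedAddCommGroup F] [NormedSpace ℝ F] [CompleteSpace F]
    (p : ENNReal) [Fact (1 ≤ p)] {u : X → E} {v : X → F}
    (hu : Integrable u μ) (hv : Integrable v μ) :
    ∫ x, WithLp.toLp p (u x, v x) ∂μ = WithLp.toLp p (∫ x, u x ∂μ, ∫ x, v x ∂μ) := by
  rw [← integral_pair hu hv]
  exact (WithLp.prodContinuousLinearEquiv p ℝ E F).symm.integral_comp_comm _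

theorem rpow_add_rpow_abs_integral_le_integral {X : Type*} [MeasurableSpace X] {μ : Measure X}
    {p : ℝ} (hp : 1 ≤ p) {u v : X → ℝ} (hu : Integrable u μ) (hv : Integrable v μ) :
    (|∫ x, u x ∂μ| ^ p + |∫ x, v x ∂μ| ^ p) ^ (1 / p) ≤
      ∫ x, (|u x| ^ p + |v x| ^ p) ^ (1 / p) ∂μ := by
  have : Fact (1 ≤ ENNReal.ofReal p) := ⟨by simpa using ENNReal.ofReal_le_ofReal hp⟩
  have hp_toReal : (ENNReal.ofReal p).toReal = p := ENNReal.toReal_ofReal (by linarith)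
  have hp_pos : 0 < (ENNReal.ofReal p).toReal := by rw [hp_toReal]; linarith
  have key := norm_integral_le_integral_norm (μ := μ)
    fun x ↦ WithLp.toLp (ENNReal.ofReal p) (u x, v x)
  rw [integral_toLp_pair _ hu hv] at key
  simpa only [WithLp.prod_norm_eq_add hp_pos, WithLp.toLp_fst, WithLp.toLp_snd, Real.norm_eq_abs,
    hp_toReal] using key

theorem Real.rpow_add_rpow_mul_rpow_one_div {c x y p : ℝ} (hc : 0 ≤ c) (hx : 0 ≤ x) (hy : 0 ≤ y)
    (hp : p ≠ 0) : ((c * x) ^ p + (c * y) ^ p) ^ (1 / p) = c * (x ^ p + y ^ p) ^ (1 / p) := by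
  rw [Real.mul_rpow hc hx, Real.mul_rpow hc hy, ← mul_add,
    Real.mul_rpow (by positivity) (by positivity), one_div, Real.rpow_rpow_inv hc hp]

theorem reverse_triangle_type (a b : ℝ) (hab : a < b) (f g h : ℝ → ℝ)
    (hf : ContinuousOn f (Set.Icc a b))
    (hg : ContinuousOn g (Set.Icc a b))
    (hh : ContinuousOn h (Set.Icc a b))
    (hfnn : ∀ x ∈ Set.Icc a b, 0 ≤ f x)
    (hgnn : ∀ x ∈ Set.Icc a b, 0 ≤ g x)
    (hhnn : ∀ x ∈ Set.Icc a b, 0 ≤ h x)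
    (p : ℝ) (hp : 1 < p) :
    ((∫ x in a..b, h x * f x) ^ p + (∫ x in a..b, h x * g x) ^ p) ^ (1 / p) ≤
      ∫ x in a..b, h x * (f x ^ p + g x ^ p) ^ (1 / p) := by
  simp only [intervalIntegral.integral_of_le hab.le]
  have hnn {u : ℝ → ℝ} (hu : ∀ x ∈ Icc a b, 0 ≤ u x) : ∀ x ∈ Ioc a b, 0 ≤ h x * u x :=
    fun x hx ↦ mul_nonneg (hhnn x (Ioc_subset_Icc_self hx)) (hu x (Ioc_subset_Icc_self hx))
  have hint {u : ℝ → ℝ} (hu : ContinuousOn u (Icc a b)) :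
      IntegrableOn (fun x ↦ h x * u x) (Ioc a b) :=
    (hh.mul hu).integrableOn_Icc.mono_set Ioc_subset_Icc_self
  calc _ = (|∫ x in Ioc a b, h x * f x| ^ p + |∫ x in Ioc a b, h x * g x| ^ p) ^ (1 / p) := by
        rw [abs_of_nonneg (setIntegral_nonneg measurableSet_Ioc (hnn hfnn)),
          abs_of_nonneg (setIntegral_nonneg measurableSet_Ioc (hnn hgnn))]
    _ ≤ ∫ x in Ioc a b, (|h x * f x| ^ p + |h x * g x| ^ p) ^ (1 / p) :=
        rpow_add_rpow_abs_integral_le_integral hp.le (hint hf) (hint hg)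
    _ = _ := setIntegral_congr_fun measurableSet_Ioc fun x hx ↦ by
        have hx' := Ioc_subset_Icc_self hx
        rw [abs_of_nonneg (hnn hfnn x hx), abs_of_nonneg (hnn hgnn x hx),
          Real.rpow_add_rpow_mul_rpow_one_div (hhnn x hx') (hfnn x hx') (hgnn x hx') (by linarith)]
end

section
/- Let f, g, h : [a,b] → [0,∞) be continuous and 0 < p < 1. Then ((∫_a^b h f dx)^p + (∫_a^b h g dx)^p)^{1/p} ≥ ∫_a^b h (f^p + g^p)^{1/p} dx. -/
/-!
Write `Φ = (F ^ p + G ^ p) ^ (1 / p)`. Since `Φ = Φ ^ p * Φ ^ (1 - p)` and `Φ ^ p = F ^ p + G ^ p`,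
Hölder's inequality with the exponents `p` and `1 - p` gives
`∫ Φ ≤ ((∫ F) ^ p + (∫ G) ^ p) * (∫ Φ) ^ (1 - p)`. As `Φ ≤ 2 ^ (1 / p - 1) * (F + G)`, `∫ Φ` is
finite, and dividing by `(∫ Φ) ^ (1 - p)` yields `∫ Φ ≤ ((∫ F) ^ p + (∫ G) ^ p) ^ (1 / p)`.
The theorem is the case `F = h f`, `G = h g`, by homogeneity of `Φ`.
-/

open MeasureTheory Set

namespace ENNReal

variable {α : Type*} [MeasurableSpace α] {μ : Measure α} {p : ℝ}

theorem rpow_add_rpow_rpow_one_div_le (hp : 0 < p) (hp1 : p ≤ 1) (a b : ℝ≥0∞) :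
    (a ^ p + b ^ p) ^ (1 / p) ≤ 2 ^ (1 / p - 1) * (a + b) := by
  have h := rpow_add_le_mul_rpow_add_rpow (a ^ p) (b ^ p) (one_le_one_div hp hp1)
  rwa [← rpow_mul, ← rpow_mul, mul_one_div_cancel hp.ne', rpow_one, rpow_one] at h

theorem le_rpow_one_div_of_le_mul_rpow_one_sub {I S : ℝ≥0∞} (hp : 0 < p) (hI : I ≠ ∞)
    (h : I ≤ S * I ^ (1 - p)) : I ≤ S ^ (1 / p) := by
  rcases eq_or_ne I 0 with rfl | hI0
  · exact bot_le
  have hIp : I ^ p ≤ S := by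
    rwa [← ENNReal.mul_le_mul_iff_left (rpow_pos (pos_iff_ne_zero.2 hI0) hI).ne'
      (rpow_ne_top_of_ne_zero hI0 hI), ← rpow_add _ _ hI0 hI, add_sub_cancel, rpow_one]
  calc I = (I ^ p) ^ (1 / p) := by rw [← rpow_mul, mul_one_div_cancel hp.ne', rpow_one]
    _ ≤ S ^ (1 / p) := rpow_le_rpow hIp (one_div_pos.2 hp).le

theorem lintegral_rpow_add_rpow_rpow_one_div_le_mul {F G : α → ℝ≥0∞} (hF : AEMeasurable F μ)
    (hG : AEMeasurable G μ) (hp : 0 < p) (hp1 : p ≤ 1) :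
    ∫⁻ x, (F x ^ p + G x ^ p) ^ (1 / p) ∂μ ≤
      ((∫⁻ x, F x ∂μ) ^ p + (∫⁻ x, G x ∂μ) ^ p) *
        (∫⁻ x, (F x ^ p + G x ^ p) ^ (1 / p) ∂μ) ^ (1 - p) := by
  set Φ := fun x => (F x ^ p + G x ^ p) ^ (1 / p)
  have hΦ : AEMeasurable Φ μ := ((hF.pow_const p).add (hG.pow_const p)).pow_const _
  have hsplit : ∀ x, Φ x = F x ^ p * Φ x ^ (1 - p) + G x ^ p * Φ x ^ (1 - p) := fun x => by
    have hΦp : Φ x ^ p = F x ^ p + G x ^ p := by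
      rw [← rpow_mul, one_div_mul_cancel hp.ne', rpow_one]
    rw [← add_mul, ← hΦp, ← rpow_add_of_nonneg _ _ hp.le (sub_nonneg.2 hp1), add_sub_cancel,
      rpow_one]
  calc ∫⁻ x, Φ x ∂μ = ∫⁻ x, F x ^ p * Φ x ^ (1 - p) + G x ^ p * Φ x ^ (1 - p) ∂μ :=
        lintegral_congr hsplit
    _ = ∫⁻ x, F x ^ p * Φ x ^ (1 - p) ∂μ + ∫⁻ x, G x ^ p * Φ x ^ (1 - p) ∂μ :=
        lintegral_add_left' ((hF.pow_const p).mul (hΦ.pow_const _)) _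
    _ ≤ (∫⁻ x, F x ∂μ) ^ p * (∫⁻ x, Φ x ∂μ) ^ (1 - p) +
          (∫⁻ x, G x ∂μ) ^ p * (∫⁻ x, Φ x ∂μ) ^ (1 - p) :=
        add_le_add (lintegral_mul_norm_pow_le hF hΦ hp.le (sub_nonneg.2 hp1) (by ring))
          (lintegral_mul_norm_pow_le hG hΦ hp.le (sub_nonneg.2 hp1) (by ring))
    _ = _ := (add_mul _ _ _).symm

theorem lintegral_rpow_add_rpow_rpow_one_div_le {F G : α → ℝ≥0∞} (hF : AEMeasurable F μ)
    (hG : AEMeasurable G μ) (hp : 0 < p) (hp1 : p ≤ 1) :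
    ∫⁻ x, (F x ^ p + G x ^ p) ^ (1 / p) ∂μ ≤
      ((∫⁻ x, F x ∂μ) ^ p + (∫⁻ x, G x ∂μ) ^ p) ^ (1 / p) := by
  by_cases hFG : ∫⁻ x, F x ∂μ + ∫⁻ x, G x ∂μ = ∞
  · rcases add_eq_top.1 hFG with h | h <;>
      simp [h, top_rpow_of_pos hp, top_rpow_of_pos (inv_pos.2 hp)]
  have hI_le : ∫⁻ x, (F x ^ p + G x ^ p) ^ (1 / p) ∂μ ≤
      2 ^ (1 / p - 1) * (∫⁻ x, F x ∂μ + ∫⁻ x, G x ∂μ) := by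
    rw [← lintegral_add_left' hF, ← lintegral_const_mul' _ _ (by finiteness)]
    exact lintegral_mono fun x => rpow_add_rpow_rpow_one_div_le hp hp1 _ _
  exact le_rpow_one_div_of_le_mul_rpow_one_sub hp
    (ne_top_of_le_ne_top (mul_ne_top (by finiteness) hFG) hI_le)
    (lintegral_rpow_add_rpow_rpow_one_div_le_mul hF hG hp hp1)

end ENNReal

theorem Real.mul_rpow_add_rpow_rpow_one_div {c u v p : ℝ} (hc : 0 ≤ c) (hu : 0 ≤ u) (hv : 0 ≤ v)
    (hp : p ≠ 0) : c * (u ^ p + v ^ p) ^ (1 / p) = ((c * u) ^ p + (c * v) ^ p) ^ (1 / p) := by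
  rw [Real.mul_rpow hc hu, Real.mul_rpow hc hv, ← mul_add,
    Real.mul_rpow (by positivity) (by positivity), ← Real.rpow_mul hc, mul_one_div_cancel hp,
    Real.rpow_one]

theorem MeasureTheory.integral_rpow_add_rpow_rpow_one_div_le {α : Type*} [MeasurableSpace α]
    {μ : Measure α} {F G : α → ℝ} (hF : Integrable F μ) (hG : Integrable G μ)
    (hF0 : 0 ≤ᵐ[μ] F) (hG0 : 0 ≤ᵐ[μ] G) {p : ℝ} (hp : 0 < p) (hp1 : p ≤ 1) :
    ∫ x, (F x ^ p + G x ^ p) ^ (1 / p) ∂μ ≤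
      ((∫ x, F x ∂μ) ^ p + (∫ x, G x ∂μ) ^ p) ^ (1 / p) := by
  have hΦ0 : 0 ≤ᵐ[μ] fun x => (F x ^ p + G x ^ p) ^ (1 / p) := by
    filter_upwards [hF0, hG0] with x (hFx : 0 ≤ F x) (hGx : 0 ≤ G x)
    positivity
  have hΦm : AEStronglyMeasurable (fun x => (F x ^ p + G x ^ p) ^ (1 / p)) μ :=
    (((hF.1.aemeasurable.pow_const p).add (hG.1.aemeasurable.pow_const p)).pow_const _)
      |>.aestronglyMeasurable
  have hofReal : (fun x => ENNReal.ofReal ((F x ^ p + G x ^ p) ^ (1 / p))) =ᵐ[μ]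
      fun x => (ENNReal.ofReal (F x) ^ p + ENNReal.ofReal (G x) ^ p) ^ (1 / p) := by
    filter_upwards [hF0, hG0] with x (hFx : 0 ≤ F x) (hGx : 0 ≤ G x)
    rw [ENNReal.ofReal_rpow_of_nonneg hFx hp.le, ENNReal.ofReal_rpow_of_nonneg hGx hp.le,
      ← ENNReal.ofReal_add (by positivity) (by positivity),
      ENNReal.ofReal_rpow_of_nonneg (by positivity) (by positivity)]
  have hAp := ENNReal.rpow_ne_top_of_nonneg hp.le hF.lintegral_lt_top.ne
  have hBp := ENNReal.rpow_ne_top_of_nonneg hp.le hG.lintegral_lt_top.ne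
  rw [integral_eq_lintegral_of_nonneg_ae hΦ0 hΦm, integral_eq_lintegral_of_nonneg_ae hF0 hF.1,
    integral_eq_lintegral_of_nonneg_ae hG0 hG.1, lintegral_congr_ae hofReal,
    ENNReal.toReal_rpow, ENNReal.toReal_rpow,
    ← ENNReal.toReal_add hAp hBp, ENNReal.toReal_rpow]
  exact ENNReal.toReal_mono
    (ENNReal.rpow_ne_top_of_nonneg (one_div_pos.2 hp).le (ENNReal.add_ne_top.2 ⟨hAp, hBp⟩))
    (ENNReal.lintegral_rpow_add_rpow_rpow_one_div_le hF.1.aemeasurable.ennreal_ofReal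
      hG.1.aemeasurable.ennreal_ofReal hp hp1)

theorem reverse_triangle_type_small_p (a b : ℝ) (hab : a < b) (f g h : ℝ → ℝ)
    (hf : ContinuousOn f (Set.Icc a b))
    (hg : ContinuousOn g (Set.Icc a b))
    (hh : ContinuousOn h (Set.Icc a b))
    (hfnn : ∀ x ∈ Set.Icc a b, 0 ≤ f x)
    (hgnn : ∀ x ∈ Set.Icc a b, 0 ≤ g x)
    (hhnn : ∀ x ∈ Set.Icc a b, 0 ≤ h x)
    (p : ℝ) (hp : 0 < p) (hp1 : p < 1) :
    ((∫ x in a..b, h x * f x) ^ p + (∫ x in a..b, h x * g x) ^ p) ^ (1 / p) ≥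
      ∫ x in a..b, h x * (f x ^ p + g x ^ p) ^ (1 / p) := by
  have hint : ∀ {u : ℝ → ℝ}, ContinuousOn u (Icc a b) →
      Integrable (fun x => h x * u x) (volume.restrict (Ioc a b)) := fun hu =>
    ((hh.mul hu).integrableOn_Icc).mono_set Ioc_subset_Icc_self
  have hnonneg : ∀ {u : ℝ → ℝ}, (∀ x ∈ Icc a b, 0 ≤ u x) →
      0 ≤ᵐ[volume.restrict (Ioc a b)] fun x => h x * u x := fun hu =>
    (ae_restrict_mem measurableSet_Ioc).mono fun x hx =>
      mul_nonneg (hhnn x (Ioc_subset_Icc_self hx)) (hu x (Ioc_subset_Icc_self hx))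
  have hhom : ∀ x ∈ uIcc a b, h x * (f x ^ p + g x ^ p) ^ (1 / p) =
      ((h x * f x) ^ p + (h x * g x) ^ p) ^ (1 / p) := fun x hx => by
    rw [uIcc_of_le hab.le] at hx
    exact Real.mul_rpow_add_rpow_rpow_one_div (hhnn x hx) (hfnn x hx) (hgnn x hx) hp.ne'
  rw [intervalIntegral.integral_congr hhom]
  simp only [intervalIntegral.integral_of_le hab.le]
  exact integral_rpow_add_rpow_rpow_one_div_le (hint hf) (hint hg) (hnonneg hfnn) (hnonneg hgnn)
    hp hp1.le
end
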